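/- If a function f : X → Y satisfies f(int(cl(int A))) ⊆ cl(f(A)) for every subset A of X, then f is β-continuous, i.e., the preimage of every open set is β-open. -/

import Mathlib

open Set

theorem compl_closure_interior_closure {X : Type*} [TopologicalSpace X] (s : Set X) :
    (closure (interior (closure s)))ᶜ = interior (closure (interior sᶜ)) := by
  rw [interior_compl, closure_compl, interior_compl]

theorem interior_closure_interior_preimage_subset_of_image_subset {X Y : Type*}
    [TopologicalSpace X] [TopologicalSpace Y] {f : X → Y}
    (hf : ∀ A : Set X, f '' (interior (closure (interior A))) ⊆ closure (f '' A))
    {C : Set Y} (hC : IsClosed C) :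
    interior (closure (interior (f ⁻¹' C))) ⊆ f ⁻¹' C := fun x hx =>
  hC.closure_subset_iff.2 (image_preimage_subset f C) (hf _ ⟨x, hx, rfl⟩)

theorem image_condition_implies_beta_continuous {X Y : Type*} [TopologicalSpace X]
    [TopologicalSpace Y] (f : X → Y)
    (hf : ∀ A : Set X, f '' (interior (closure (interior A))) ⊆ closure (f '' A)) :
    ∀ U : Set Y, IsOpen U → f ⁻¹' U ⊆ closure (interior (closure (f ⁻¹' U))) := by
  intro U hU
  rw [← compl_subset_compl, compl_closure_interior_closure, ← preimage_compl]
  exact interior_closure_interior_preimage_subset_of_image_subset hf hU.isClosed_compl
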